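/- (L-stability limit of the IRK-GL-ADER-DG method.) Assume κ is invertible and every weight w_p is nonzero, and let a = κ⁻¹ · diag(w). Then a is invertible and wᵀ a⁻¹ 𝟙 = Σ_{p,q=0}^{N} w_p (a⁻¹)_{pq} = 1; consequently the stability function R(z) = 1 + z wᵀ (I − z a)⁻¹ 𝟙 tends to 1 − wᵀ a⁻¹ 𝟙 = 0 as the real variable z tends to +∞ (and likewise as z → −∞). -/

import Mathlib

/-!
The Lagrange basis is a partition of unity, so `∑ φ_p = 1` and `∑ φ_p' = 0`; summing all
entries of `κ` therefore gives `(∑ ψ̃_p)² - ∫₀¹ (∑ φ_p')(∑ φ_q) = 1`. Since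
`a⁻¹ = diag(w)⁻¹ κ`, this sum is exactly `wᵀ a⁻¹ 𝟙`. For the limit, write `s = z⁻¹`: then
`1 - z a = -z (a - s I)`, so `R(z) = 1 - wᵀ (a - s I)⁻¹ 𝟙`, which is continuous in `s` at `0`
because `a` is invertible, and `s → 0` as `|z| → ∞`.
-/

open Matrix Filter

open Polynomial in
theorem Lagrange.eval_basis {F ι : Type*} [Field F] [DecidableEq ι] (s : Finset ι) (v : ι → F)
    (i : ι) (x : F) :
    (Lagrange.basis s v i).eval x = ∏ j ∈ s.erase i, (x - v j) / (v i - v j) := by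
  rw [Lagrange.basis, eval_prod]
  refine Finset.prod_congr rfl fun j _ => ?_
  simp [Lagrange.basisDivisor, div_eq_mul_inv, mul_comm]

open Polynomial in
theorem sum_sum_integral_derivative_mul_eq_zero {ι : Type*} {s : Finset ι} {P : ι → ℝ[X]}
    (hP : ∑ i ∈ s, P i = 1) (a b : ℝ) :
    ∑ i ∈ s, ∑ j ∈ s, ∫ x in a..b, (P i).derivative.eval x * (P j).eval x = 0 := by
  have hint : ∀ p : ℝ[X], IntervalIntegrable (fun x => p.eval x) MeasureTheory.volume a b :=
    fun p => p.continuous.intervalIntegrable a b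
  have hpoly : ∑ i ∈ s, ∑ j ∈ s, derivative (P i) * P j = 0 := by
    rw [← Finset.sum_mul_sum, ← derivative_sum, hP, derivative_one, zero_mul]
  calc ∑ i ∈ s, ∑ j ∈ s, ∫ x in a..b, (P i).derivative.eval x * (P j).eval x
      = ∑ i ∈ s, ∫ x in a..b, ∑ j ∈ s, (derivative (P i) * P j).eval x := by
        refine Finset.sum_congr rfl fun i _ => ?_
        rw [intervalIntegral.integral_finsetSum fun j _ => hint _]
        simp only [eval_mul]
    _ = ∫ x in a..b, ∑ i ∈ s, ∑ j ∈ s, (derivative (P i) * P j).eval x := by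
        refine (intervalIntegral.integral_finsetSum fun i _ => ?_).symm
        simpa only [eval_finsetSum] using hint (∑ j ∈ s, derivative (P i) * P j)
    _ = 0 := by simp only [← eval_finsetSum, hpoly, eval_zero, intervalIntegral.integral_zero]

open Polynomial in
theorem sum_sum_eval_mul_eval_sub_integral_eq_one {ι : Type*} {s : Finset ι} {P : ι → ℝ[X]}
    (hP : ∑ i ∈ s, P i = 1) (t a b : ℝ) :
    ∑ i ∈ s, ∑ j ∈ s,
      ((P i).eval t * (P j).eval t - ∫ x in a..b, (P i).derivative.eval x * (P j).eval x) = 1 := by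
  simp only [Finset.sum_sub_distrib, ← Finset.sum_mul_sum, ← eval_finsetSum, hP, eval_one,
    sum_sum_integral_derivative_mul_eq_zero hP]
  norm_num

theorem Matrix.dotProduct_mulVec_one {R m n : Type*} [Semiring R] [Fintype m] [Fintype n]
    (w : m → R) (M : Matrix m n R) :
    w ⬝ᵥ M.mulVec (fun _ => 1) = ∑ p, ∑ q, w p * M p q := by
  simp [dotProduct, mulVec, Finset.mul_sum]

namespace Matrix

variable {K n : Type*} [Field K] [Fintype n] [DecidableEq n]

/-- Unlike `Matrix.inv_smul'`, this needs no invertibility of `A`: otherwise both sides are `0`. -/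
theorem inv_smul_of_ne_zero (A : Matrix n n K) {k : K} (hk : k ≠ 0) :
    (k • A)⁻¹ = k⁻¹ • A⁻¹ := by
  by_cases hA : IsUnit A.det
  · refine inv_eq_left_inv ?_
    rw [smul_mul_smul_comm, inv_mul_cancel₀ hk, nonsing_inv_mul A hA, one_smul]
  · have hkA : ¬IsUnit (k • A).det := by
      simpa [det_smul, isUnit_iff_ne_zero, hk] using hA
    rw [nonsing_inv_apply_not_isUnit _ hA, nonsing_inv_apply_not_isUnit _ hkA, smul_zero]

theorem inv_diagonal_of_ne_zero {w : n → K} (hw : ∀ i, w i ≠ 0) :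
    (diagonal w)⁻¹ = diagonal w⁻¹ := by
  refine inv_eq_left_inv ?_
  rw [diagonal_mul_diagonal, ← diagonal_one]
  exact congrArg diagonal (funext fun i => inv_mul_cancel₀ (hw i))

end Matrix

noncomputable def rkStabilityFunction {𝕜 n : Type*} [Field 𝕜] [Fintype n] [DecidableEq n]
    (a : Matrix n n 𝕜) (b : n → 𝕜) (z : 𝕜) : 𝕜 :=
  1 + z * (b ⬝ᵥ (1 - z • a)⁻¹.mulVec fun _ => 1)

section Stability

variable {𝕜 n : Type*} [NontriviallyNormedField 𝕜] [Fintype n] [DecidableEq n]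

theorem rkStabilityFunction_eq_of_ne_zero (a : Matrix n n 𝕜) (b : n → 𝕜) {z : 𝕜} (hz : z ≠ 0) :
    rkStabilityFunction a b z = 1 - b ⬝ᵥ (a - z⁻¹ • 1)⁻¹.mulVec fun _ => 1 := by
  have hfac : (1 : Matrix n n 𝕜) - z • a = (-z) • (a - z⁻¹ • 1) := by
    rw [smul_sub, smul_smul, neg_mul, mul_inv_cancel₀ hz, neg_smul, neg_smul, one_smul,
      sub_neg_eq_add, neg_add_eq_sub]
  rw [rkStabilityFunction, hfac, inv_smul_of_ne_zero _ (neg_ne_zero.mpr hz), smul_mulVec,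
    dotProduct_smul, smul_eq_mul, ← mul_assoc, inv_neg, mul_neg, mul_inv_cancel₀ hz]
  ring

theorem continuousAt_inv_sub_smul_one {a : Matrix n n 𝕜} (ha : IsUnit a.det) :
    ContinuousAt (fun s : 𝕜 => (a - s • 1)⁻¹) 0 := by
  have hinv : ContinuousAt Inv.inv (a - (0 : 𝕜) • 1) := by
    rw [zero_smul, sub_zero]
    refine continuousAt_matrix_inv a ?_
    rw [Ring.inverse_eq_inv']
    exact continuousAt_inv₀ ha.ne_zero
  exact hinv.comp (f := fun s : 𝕜 => a - s • 1) (by fun_prop)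

theorem tendsto_rkStabilityFunction_cobounded {a : Matrix n n 𝕜} (ha : IsUnit a.det)
    (b : n → 𝕜) :
    Tendsto (rkStabilityFunction a b) (Bornology.cobounded 𝕜)
      (nhds (1 - b ⬝ᵥ a⁻¹.mulVec fun _ => 1)) := by
  have hcont : ContinuousAt (fun s : 𝕜 => 1 - b ⬝ᵥ (a - s • 1)⁻¹.mulVec fun _ => 1) 0 :=
    continuousAt_const.sub ((continuous_const.dotProduct
      (continuous_id.matrix_mulVec continuous_const)).continuousAt.comp
        (continuousAt_inv_sub_smul_one ha))
  have hlim := (hcont.tendsto.mono_left nhdsWithin_le_nhds).comp tendsto_inv₀_cobounded'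
  rw [zero_smul, sub_zero] at hlim
  refine hlim.congr' ?_
  filter_upwards [tendsto_inv₀_cobounded'.eventually self_mem_nhdsWithin] with z hz
  exact (rkStabilityFunction_eq_of_ne_zero a b (inv_eq_zero.not.mp hz)).symm

end Stability

theorem aderdg_L_stability_limit_general
    (N : ℕ) (τ : Fin (N + 1) → ℝ) (hτ : Function.Injective τ)
    (φ : Fin (N + 1) → ℝ → ℝ)
    (hφ : ∀ p x, φ p x = ∏ k ∈ Finset.univ.erase p, (x - τ k) / (τ p - τ k))
    (ψt w : Fin (N + 1) → ℝ)
    (hψt : ∀ p, ψt p = φ p 1)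
    (κ : Matrix (Fin (N + 1)) (Fin (N + 1)) ℝ)
    (hκ : ∀ p q, κ p q = ψt p * ψt q - ∫ x in (0:ℝ)..1, deriv (φ p) x * φ q x)
    (hinv : IsUnit κ.det) (hwne : ∀ p, w p ≠ 0)
    (a : Matrix (Fin (N + 1)) (Fin (N + 1)) ℝ)
    (ha : a = κ⁻¹ * Matrix.diagonal w)
    (R : ℝ → ℝ)
    (hR : ∀ z, R z = 1 + z * (w ⬝ᵥ ((1 : Matrix (Fin (N + 1)) (Fin (N + 1)) ℝ)
      - z • a)⁻¹.mulVec (fun _ => (1:ℝ)))) :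
    IsUnit a.det ∧
      (∑ p, ∑ q, w p * a⁻¹ p q = 1) ∧
      (1 - w ⬝ᵥ a⁻¹.mulVec (fun _ => (1:ℝ)) = 0) ∧
      Tendsto R atTop (nhds 0) ∧
      Tendsto R atBot (nhds 0) := by
  set L := Lagrange.basis Finset.univ τ
  have hφL : ∀ p, φ p = fun x => (L p).eval x :=
    fun p => funext fun x => by rw [hφ, Lagrange.eval_basis]
  have hL : ∑ p, L p = 1 := Lagrange.sum_basis hτ.injOn Finset.univ_nonempty
  have hκsum : ∑ p, ∑ q, κ p q = 1 := by
    simp only [hκ, hψt, hφL, Polynomial.deriv]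
    exact sum_sum_eval_mul_eval_sub_integral_eq_one hL 1 0 1
  have hdet : IsUnit a.det := by
    rw [ha, det_mul, det_diagonal]
    exact (κ.isUnit_nonsing_inv_det hinv).mul
      (isUnit_iff_ne_zero.mpr (Finset.prod_ne_zero_iff.mpr fun p _ => hwne p))
  have hsum : ∑ p, ∑ q, w p * a⁻¹ p q = 1 := by
    simp only [ha, Matrix.mul_inv_rev, nonsing_inv_nonsing_inv κ hinv,
      inv_diagonal_of_ne_zero hwne, diagonal_mul, Pi.inv_apply, ← mul_assoc,
      mul_inv_cancel₀ (hwne _), one_mul, hκsum]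
  have hdot : 1 - w ⬝ᵥ a⁻¹.mulVec (fun _ => (1:ℝ)) = 0 := by
    rw [dotProduct_mulVec_one, hsum, sub_self]
  have hlim : Tendsto R (Bornology.cobounded ℝ) (nhds 0) := by
    rw [← hdot, show R = rkStabilityFunction a w from funext hR]
    exact tendsto_rkStabilityFunction_cobounded hdet w
  exact ⟨hdet, hsum, hdot, hlim.mono_left IsOrderBornology.atTop_le_cobounded,
    hlim.mono_left IsOrderBornology.atBot_le_cobounded⟩

/-- L-stability limit of the IRK-GL-ADER-DG method: a is
invertible, wᵀ a⁻¹ 𝟙 = 1, and the stability function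
R(z) = 1 + z wᵀ (I − z a)⁻¹ 𝟙 tends to 1 − wᵀ a⁻¹ 𝟙 = 0 as z → +∞ and as
z → −∞. -/
theorem aderdg_L_stability_limit
    (N : ℕ) (τ : Fin (N + 1) → ℝ) (hτ : Function.Injective τ)
    (φ : Fin (N + 1) → ℝ → ℝ)
    (hφ : ∀ p x, φ p x = ∏ k ∈ Finset.univ.erase p, (x - τ k) / (τ p - τ k))
    (ψ ψt w : Fin (N + 1) → ℝ)
    (hψ : ∀ p, ψ p = φ p 0) (hψt : ∀ p, ψt p = φ p 1)
    (hw : ∀ p, w p = ∫ x in (0:ℝ)..1, φ p x)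
    (κ : Matrix (Fin (N + 1)) (Fin (N + 1)) ℝ)
    (hκ : ∀ p q, κ p q = ψt p * ψt q - ∫ x in (0:ℝ)..1, deriv (φ p) x * φ q x)
    (hinv : IsUnit κ.det) (hwne : ∀ p, w p ≠ 0)
    (a : Matrix (Fin (N + 1)) (Fin (N + 1)) ℝ)
    (ha : a = κ⁻¹ * Matrix.diagonal w)
    (R : ℝ → ℝ)
    (hR : ∀ z, R z = 1 + z * (w ⬝ᵥ ((1 : Matrix (Fin (N + 1)) (Fin (N + 1)) ℝ)
      - z • a)⁻¹.mulVec (fun _ => (1:ℝ)))) :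
    IsUnit a.det ∧
      (∑ p, ∑ q, w p * a⁻¹ p q = 1) ∧
      (1 - w ⬝ᵥ a⁻¹.mulVec (fun _ => (1:ℝ)) = 0) ∧
      Tendsto R atTop (nhds 0) ∧
      Tendsto R atBot (nhds 0) :=
  aderdg_L_stability_limit_general N τ hτ φ hφ ψt w hψt κ hκ hinv hwne a ha R hR
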